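/- Let A : Fin m → Fin n → ℝ and B : Fin m → Fin k → ℝ (m, n, k ≥ 1) and x₀ : Fin n → ℝ. If for some r ≥ 1 every coordinate has strictly decreased below the starting vector, i.e. (ψ^[r](x₀)) j < x₀ j for all j ∈ Fin n, then the separated system has no finite solution: there exist no x : Fin n → ℝ and y : Fin k → ℝ with (A⊗x) i = (B⊗y) i for all i ∈ Fin m. -/

import Mathlib

open Finset

/-- Max-plus product of a real matrix with a real vector:
`(M ⊗ x) i = max_l (M i l + x l)`. -/
noncomputable def mpR {p q : ℕ} [NeZero p] [NeZero q]
    (M : Fin p → Fin q → ℝ) (x : Fin q → ℝ) : Fin p → ℝ :=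
  fun i => univ.sup' univ_nonempty fun l => M i l + x l

/-- First half-step of the alternating method for the separated system
`A ⊗ x = B ⊗ y`: `g(x) l = min_i ( -B i l + (A ⊗ x) i )`. -/
noncomputable def gR {m n k : ℕ} [NeZero m] [NeZero n] [NeZero k]
    (A : Fin m → Fin n → ℝ) (B : Fin m → Fin k → ℝ) (x : Fin n → ℝ) : Fin k → ℝ :=
  fun l => univ.inf' univ_nonempty fun i => -B i l + mpR A x i

/-- One full iteration of the alternating method:
`ψ(x) j = min_i ( -A i j + (B ⊗ g(x)) i )`. -/
noncomputable def psiR {m n k : ℕ} [NeZero m] [NeZero n] [NeZero k]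
    (A : Fin m → Fin n → ℝ) (B : Fin m → Fin k → ℝ) (x : Fin n → ℝ) : Fin n → ℝ :=
  fun j => univ.inf' univ_nonempty fun i => -A i j + mpR B (gR A B x) i

/-!
A solution `x` of `A ⊗ x = B ⊗ y` satisfies `x ≤ ψ x`, by residuation. Since `ψ` is monotone and
commutes with adding a constant vector, so is `ψ^[r]`, and `x ≤ ψ^[r] x`. Shift `x₀` up by the
least `c` with `x ≤ x₀ + c`, so that equality holds at some coordinate `j`; then
`x₀ j + c = x j ≤ ψ^[r] x j ≤ ψ^[r] (x₀ + c) j = ψ^[r] x₀ j + c`, so `ψ^[r]` cannot decrease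
every coordinate of `x₀`.
-/

open Function

theorem exists_le_apply_of_le_map {ι : Type*} [Finite ι] [Nonempty ι]
    {f : (ι → ℝ) → ι → ℝ} (hf : Monotone f)
    (hconst : ∀ c : ℝ, Function.Commute f (· + const ι c))
    {x : ι → ℝ} (hx : x ≤ f x) (x₀ : ι → ℝ) : ∃ j, x₀ j ≤ f x₀ j := by
  obtain ⟨j, hj⟩ := Finite.exists_max fun i => x i - x₀ i
  have hle : x ≤ x₀ + const ι (x j - x₀ j) := fun i => by
    simp only [Pi.add_apply, const_apply]
    linarith [hj i]
  have key : x j ≤ f x₀ j + (x j - x₀ j) :=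
    calc x j ≤ f x j := hx j
      _ ≤ f (x₀ + const ι (x j - x₀ j)) j := hf hle j
      _ = f x₀ j + (x j - x₀ j) := congrFun (hconst _ x₀) j
  exact ⟨j, by linarith⟩

/-- Cuninghame-Green's residuated product `M♯ ⊗' v`, the upper adjoint of `mpR M`. -/
noncomputable def mpResidual {p q : ℕ} [NeZero p] [NeZero q]
    (M : Fin p → Fin q → ℝ) (v : Fin p → ℝ) : Fin q → ℝ :=
  fun l => univ.inf' univ_nonempty fun i => -M i l + v i

section Residuation

variable {p q : ℕ} [NeZero p] [NeZero q] (M : Fin p → Fin q → ℝ)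

theorem gc_mpR_mpResidual : GaloisConnection (mpR M) (mpResidual M) := by
  intro y v
  simp only [Pi.le_def, mpR, mpResidual, sup'_le_iff, le_inf'_iff, mem_univ, true_implies]
  constructor <;> intro h a b <;> linarith [h b a]

theorem mpR_add_const (c : ℝ) :
    Semiconj (mpR M) (· + const (Fin q) c) (· + const (Fin p) c) := fun x => by
  ext i
  simp only [mpR, Pi.add_apply, const_apply, sup'_add, add_assoc]

theorem mpResidual_add_const (c : ℝ) :
    Semiconj (mpResidual M) (· + const (Fin p) c) (· + const (Fin q) c) := fun v => by
  ext l
  simp only [mpResidual, Pi.add_apply, const_apply, ← add_assoc]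
  exact (map_finset_inf' (OrderIso.addRight c) _ _).symm

end Residuation

section AlternatingMethod

variable {m n k : ℕ} [NeZero m] [NeZero n] [NeZero k]
  (A : Fin m → Fin n → ℝ) (B : Fin m → Fin k → ℝ)

theorem psiR_eq_comp : psiR A B = mpResidual A ∘ mpR B ∘ mpResidual B ∘ mpR A := rfl

theorem monotone_psiR : Monotone (psiR A B) :=
  psiR_eq_comp A B ▸ (gc_mpR_mpResidual A).monotone_u.comp <|
    (gc_mpR_mpResidual B).monotone_l.comp <|
    (gc_mpR_mpResidual B).monotone_u.comp (gc_mpR_mpResidual A).monotone_l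

theorem psiR_commute_add_const (c : ℝ) : Function.Commute (psiR A B) (· + const (Fin n) c) :=
  psiR_eq_comp A B ▸ (mpResidual_add_const A c).comp_left <| (mpR_add_const B c).comp_left <|
    (mpResidual_add_const B c).comp_left (mpR_add_const A c)

theorem le_psiR_of_mpR_eq {x : Fin n → ℝ} {y : Fin k → ℝ} (h : mpR A x = mpR B y) :
    x ≤ psiR A B x := by
  have hy : y ≤ mpResidual B (mpR A x) := (gc_mpR_mpResidual B).le_u h.ge
  exact (gc_mpR_mpResidual A).le_u (h.trans_le ((gc_mpR_mpResidual B).monotone_l hy))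

end AlternatingMethod

theorem stmt15_general {m n k : ℕ} [NeZero m] [NeZero n] [NeZero k]
    (A : Fin m → Fin n → ℝ) (B : Fin m → Fin k → ℝ)
    (x₀ : Fin n → ℝ) (r : ℕ)
    (hdec : ∀ j : Fin n, ((psiR A B)^[r] x₀) j < x₀ j) :
    ¬ ∃ (x : Fin n → ℝ) (y : Fin k → ℝ),
        ∀ i : Fin m, mpR A x i = mpR B y i := by
  rintro ⟨x, y, hsol⟩
  have hx : x ≤ (psiR A B)^[r] x :=
    (monotone_psiR A B).monotone_iterate_of_le_map (le_psiR_of_mpR_eq A B (funext hsol))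
      (Nat.zero_le r)
  obtain ⟨j, hj⟩ := exists_le_apply_of_le_map ((monotone_psiR A B).iterate r)
    (fun c => (psiR_commute_add_const A B c).iterate_left r) hx x₀
  exact (hdec j).not_ge hj

theorem stmt15 {m n k : ℕ} [NeZero m] [NeZero n] [NeZero k]
    (A : Fin m → Fin n → ℝ) (B : Fin m → Fin k → ℝ)
    (x₀ : Fin n → ℝ) (r : ℕ) (hr : 1 ≤ r)
    (hdec : ∀ j : Fin n, ((psiR A B)^[r] x₀) j < x₀ j) :
    ¬ ∃ (x : Fin n → ℝ) (y : Fin k → ℝ),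
        ∀ i : Fin m, mpR A x i = mpR B y i :=
  stmt15_general A B x₀ r hdec
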